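/- The restriction of an extremal representation to a reducing subspace is extremal: if φ: A → B(H) is extremal and M ⊆ H reduces φ(A), then φ|_M is extremal. -/

import Mathlib

/-!
Given a lifting `(K, ψ, V)` of `φ|_M`, enlarge it to a lifting of `φ` itself: since `M` reduces
`φ(A)`, the orthogonal projection onto `M` commutes with `φ(A)`, so `h ↦ (V (P_M h), P_{M⊥} h)`
embeds `H` isometrically into `K ⊕ H` and intertwines `φ` with `ψ ⊕ φ`. Extremality of `φ` makes
`ψ(a)* ⊕ φ(a)*` map this copy of `H` into itself, and on `M` its first coordinate says that
`ψ(a)*` maps `V(M)` into itself.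
-/

universe u v

/-- A representation `φ : A → B(H)` is *extremal* if for every representation
`ψ : A → B(K)` on a Hilbert space `K` containing `H` (via a linear isometry `V`) such
that `V(H)` is invariant for `ψ` and `ψ` restricts to `φ` there (a *lifting*), the
subspace `V(H)` in fact reduces `ψ(A)`, i.e. it is also invariant for every `ψ(a)*`. -/
def IsExtremal {A : Type v} [NonUnitalRing A] [Module ℂ A]
    {H : Type u} [NormedAddCommGroup H] [InnerProductSpace ℂ H] [CompleteSpace H]
    (φ : A →ₙₐ[ℂ] (H →L[ℂ] H)) : Prop :=
  ∀ (K : Type u) (_ : NormedAddCommGroup K) (_ : InnerProductSpace ℂ K)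
    (_ : CompleteSpace K) (ψ : A →ₙₐ[ℂ] (K →L[ℂ] K)) (V : H →ₗᵢ[ℂ] K),
    (∀ (a : A) (h : H), ψ a (V h) = V (φ a h)) →
    ∀ (a : A) (h : H), ∃ h' : H, star (ψ a) (V h) = V h'

open ContinuousLinearMap Module.End Submodule
open scoped InnerProduct

namespace ContinuousLinearMap

section withLpProdMap

variable {𝕜 : Type*} [NormedField 𝕜] (p : ENNReal)
  {E F E' F' : Type*} [SeminormedAddCommGroup E] [NormedSpace 𝕜 E]
  [SeminormedAddCommGroup F] [NormedSpace 𝕜 F] [SeminormedAddCommGroup E'] [NormedSpace 𝕜 E']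
  [SeminormedAddCommGroup F'] [NormedSpace 𝕜 F']

noncomputable def withLpProdMap [Fact (1 ≤ p)] (T : E →L[𝕜] E') (S : F →L[𝕜] F') :
    WithLp p (E × F) →L[𝕜] WithLp p (E' × F') :=
  (WithLp.prodContinuousLinearEquiv p 𝕜 E' F').symm ∘L T.prodMap S ∘L
    WithLp.prodContinuousLinearEquiv p 𝕜 E F

@[simp]
lemma withLpProdMap_apply [Fact (1 ≤ p)] (T : E →L[𝕜] E') (S : F →L[𝕜] F')
    (x : WithLp p (E × F)) :
    withLpProdMap p T S x = WithLp.toLp p (T x.fst, S x.snd) := rfl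

end withLpProdMap

variable {𝕜 : Type*} [RCLike 𝕜] {E F E' F' : Type*}
  [NormedAddCommGroup E] [InnerProductSpace 𝕜 E] [CompleteSpace E]
  [NormedAddCommGroup F] [InnerProductSpace 𝕜 F] [CompleteSpace F]
  [NormedAddCommGroup E'] [InnerProductSpace 𝕜 E'] [CompleteSpace E']
  [NormedAddCommGroup F'] [InnerProductSpace 𝕜 F'] [CompleteSpace F']

lemma adjoint_withLpProdMap (T : E →L[𝕜] E') (S : F →L[𝕜] F') :
    (withLpProdMap 2 T S)† = withLpProdMap 2 (T†) (S†) := by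
  refine ((eq_adjoint_iff _ _).2 fun x y => ?_).symm
  simp [adjoint_inner_left]

end ContinuousLinearMap

namespace Submodule

variable {𝕜 E : Type*} [RCLike 𝕜] [NormedAddCommGroup E] [InnerProductSpace 𝕜 E]

lemma commute_starProjection_of_mem_invtSubmodule [CompleteSpace E] {U : Submodule 𝕜 E}
    [U.HasOrthogonalProjection] {T : E →L[𝕜] E} (hT : U ∈ invtSubmodule (T : E →ₗ[𝕜] E))
    (hT' : U ∈ invtSubmodule (T† : E →ₗ[𝕜] E)) : Commute U.starProjection T :=
  U.isIdempotentElem_starProjection.commute_iff.2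
    ⟨by simpa using hT, by simpa using orthogonal_mem_invtSubmodule hT'⟩

variable (U : Submodule 𝕜 E) [U.HasOrthogonalProjection]
  {K : Type*} [NormedAddCommGroup K] [InnerProductSpace 𝕜 K]

noncomputable def extendIsometry (V : U →ₗᵢ[𝕜] K) : E →ₗᵢ[𝕜] WithLp 2 (K × E) :=
  (V.withLpProdMap 2 Uᗮ.subtypeₗᵢ).comp U.orthogonalDecomposition.toLinearIsometry

@[simp]
lemma extendIsometry_apply (V : U →ₗᵢ[𝕜] K) (x : E) :
    U.extendIsometry V x =
      WithLp.toLp 2 (V (U.orthogonalProjectionOnto x), Uᗮ.starProjection x) := by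
  simp [extendIsometry]

end Submodule

namespace NonUnitalAlgHom

section withLpProd

variable {𝕜 A : Type*} [NormedField 𝕜] [NonUnitalNonAssocSemiring A] [Module 𝕜 A]
  (p : ENNReal) [Fact (1 ≤ p)] {E F : Type*} [SeminormedAddCommGroup E] [NormedSpace 𝕜 E]
  [SeminormedAddCommGroup F] [NormedSpace 𝕜 F]

noncomputable def withLpProd (ψ : A →ₙₐ[𝕜] (E →L[𝕜] E)) (ρ : A →ₙₐ[𝕜] (F →L[𝕜] F)) :
    A →ₙₐ[𝕜] (WithLp p (E × F) →L[𝕜] WithLp p (E × F)) where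
  toFun a := withLpProdMap p (ψ a) (ρ a)
  map_smul' c a := by ext x : 1; simp [← WithLp.toLp_smul]
  map_zero' := by ext x : 1; simp
  map_add' a b := by ext x : 1; simp [← WithLp.toLp_add]
  map_mul' a b := by ext x : 1; simp

@[simp]
lemma withLpProd_apply (ψ : A →ₙₐ[𝕜] (E →L[𝕜] E)) (ρ : A →ₙₐ[𝕜] (F →L[𝕜] F)) (a : A) :
    withLpProd p ψ ρ a = withLpProdMap p (ψ a) (ρ a) := rfl

end withLpProd

variable {𝕜 A E K : Type*} [RCLike 𝕜] [NonUnitalNonAssocSemiring A] [Module 𝕜 A]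
  [NormedAddCommGroup E] [InnerProductSpace 𝕜 E] [NormedAddCommGroup K] [InnerProductSpace 𝕜 K]

theorem withLpProd_apply_extendIsometry {φ : A →ₙₐ[𝕜] (E →L[𝕜] E)} {U : Submodule 𝕜 E}
    [U.HasOrthogonalProjection] (hU : ∀ a, Commute U.starProjection (φ a))
    {φU : A →ₙₐ[𝕜] (U →L[𝕜] U)} (hres : ∀ (a : A) (x : U), (φU a x : E) = φ a x)
    {ψ : A →ₙₐ[𝕜] (K →L[𝕜] K)} {V : U →ₗᵢ[𝕜] K}
    (hV : ∀ (a : A) (x : U), ψ a (V x) = V (φU a x)) (a : A) (x : E) :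
    ψ.withLpProd 2 φ a (U.extendIsometry V x) = U.extendIsometry V (φ a x) := by
  have hPx : U.starProjection (φ a x) = φ a (U.starProjection x) :=
    DFunLike.congr_fun (hU a).eq x
  have hUx : φU a (U.orthogonalProjectionOnto x) = U.orthogonalProjectionOnto (φ a x) :=
    Subtype.ext (by simpa [hres] using hPx.symm)
  simp [hV, hUx, hPx]

end NonUnitalAlgHom

theorem restriction_of_extremal_to_reducing_is_extremal_general
    {A : Type v} [NonUnitalRing A] [Module ℂ A]
    {H : Type u} [NormedAddCommGroup H] [InnerProductSpace ℂ H] [CompleteSpace H]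
    (φ : A →ₙₐ[ℂ] (H →L[ℂ] H)) (hφ : IsExtremal φ)
    (M : Submodule ℂ H) [CompleteSpace M]
    -- `M` reduces `φ(A)`
    (hred : ∀ a : A, (∀ x ∈ M, φ a x ∈ M) ∧ (∀ x ∈ M, star (φ a) x ∈ M))
    -- `φM` is the restriction of `φ` to `M`
    (φM : A →ₙₐ[ℂ] (M →L[ℂ] M))
    (hres : ∀ (a : A) (x : M), ((φM a x : M) : H) = φ a (x : H)) :
    IsExtremal φM := by
  intro K _ _ _ ψ V hV a m
  have hcomm (a : A) : Commute M.starProjection (φ a) :=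
    commute_starProjection_of_mem_invtSubmodule (hred a).1 (hred a).2
  obtain ⟨x, hx⟩ := hφ (WithLp 2 (K × H)) inferInstance inferInstance inferInstance
    (ψ.withLpProd 2 φ) (M.extendIsometry V)
    (NonUnitalAlgHom.withLpProd_apply_extendIsometry hcomm hres hV) a m
  refine ⟨M.orthogonalProjectionOnto x, ?_⟩
  simpa [star_eq_adjoint, adjoint_withLpProdMap] using congr(($hx).fst)

/-- The restriction of an extremal representation to a reducing
subspace is extremal: if `φ : A → B(H)` is extremal and the closed subspace `M ⊆ H`
reduces `φ(A)`, then `φ|_M` is extremal. -/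
theorem restriction_of_extremal_to_reducing_is_extremal
    {A : Type v} [NonUnitalRing A] [Module ℂ A]
    {H : Type u} [NormedAddCommGroup H] [InnerProductSpace ℂ H] [CompleteSpace H]
    (φ : A →ₙₐ[ℂ] (H →L[ℂ] H)) (hφ : IsExtremal φ)
    (M : Submodule ℂ H) (hM : IsClosed (M : Set H)) [CompleteSpace M]
    -- `M` reduces `φ(A)`
    (hred : ∀ a : A, (∀ x ∈ M, φ a x ∈ M) ∧ (∀ x ∈ M, star (φ a) x ∈ M))
    -- `φM` is the restriction of `φ` to `M`
    (φM : A →ₙₐ[ℂ] (M →L[ℂ] M))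
    (hres : ∀ (a : A) (x : M), ((φM a x : M) : H) = φ a (x : H)) :
    IsExtremal φM :=
  restriction_of_extremal_to_reducing_is_extremal_general φ hφ M hred φM hres
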